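/- For every linearization L of a pseudo-linear set X ⊆ ℤ^n, dim(X) = dim(L). -/

import Mathlib

open scoped Pointwise

/-- The finite set `B` generates the set `V` as a ℚ-vector space. -/
def GeneratesQ {n : ℕ} (B : Finset (Fin n → ℚ)) (V : Set (Fin n → ℚ)) : Prop :=
  (Submodule.span ℚ (B : Set (Fin n → ℚ)) : Set (Fin n → ℚ)) = V

/-- The rank of a vector space `V ⊆ ℚ^n`: minimal cardinality of a finite generating set. -/
noncomputable def rankOf {n : ℕ} (V : Set (Fin n → ℚ)) : ℕ :=
  sInf {d | ∃ B : Finset (Fin n → ℚ), B.card = d ∧ GeneratesQ B V}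

-- Dimension of a subset of ℚ^n via finite covers by translates of vector spaces.
open Classical in
noncomputable def dimQ {n : ℕ} (X : Set (Fin n → ℚ)) : WithBot ℕ :=
  if X = ∅ then ⊥ else
    ↑(sInf {d : ℕ | ∃ (k : ℕ) (V : Fin k → Submodule ℚ (Fin n → ℚ))
        (a : Fin k → (Fin n → ℚ)),
        (∀ j, rankOf ((V j : Set (Fin n → ℚ))) ≤ d) ∧
        X ⊆ ⋃ j, (a j +ᵥ (V j : Set (Fin n → ℚ)))})

/-- Dimension of a subset of ℤ^n, via the canonical embedding ℤ^n → ℚ^n. -/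
noncomputable def dimZ {n : ℕ} (X : Set (Fin n → ℤ)) : WithBot ℕ :=
  dimQ ((fun (x : Fin n → ℤ) (i : Fin n) => (x i : ℚ)) '' X)

/-- `a` is an interior vector of the monoid `M ⊆ ℤ^n`. -/
def IsInteriorZ {n : ℕ} (M : Set (Fin n → ℤ)) (a : Fin n → ℤ) : Prop :=
  a ∈ M ∧ ∀ x ∈ M, ∃ N : ℕ, 1 ≤ N ∧ ∃ m ∈ M, N • a = x + m

/-- `M` is a finitely generated (additive sub)monoid of ℤ^n (as a set). -/
def IsFGMonoid {n : ℕ} (M : Set (Fin n → ℤ)) : Prop :=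
  ∃ P : Finset (Fin n → ℤ),
    M = (AddSubmonoid.closure (P : Set (Fin n → ℤ)) : Set (Fin n → ℤ))

/-- `L` is a linearization of the pseudo-linear set `X`. -/
def IsLinearization {n : ℕ} (L X : Set (Fin n → ℤ)) : Prop :=
  ∃ (b : Fin n → ℤ) (M : Set (Fin n → ℤ)), IsFGMonoid M ∧ L = b +ᵥ M ∧ X ⊆ L ∧
    ∀ R : Finset (Fin n → ℤ), (∀ r ∈ R, IsInteriorZ M r) →
      ∃ x ∈ X, x +ᵥ (AddSubmonoid.closure (R : Set (Fin n → ℤ)) : Set (Fin n → ℤ)) ⊆ X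

/-- `X ⊆ ℤ^n` is pseudo-linear. -/
def IsPseudoLinear {n : ℕ} (X : Set (Fin n → ℤ)) : Prop :=
  ∃ L, IsLinearization L X

/-!
`L = b + M` and `X ⊆ L` lie in the affine space `b + span M`, so both dimensions are at most
`rank M`. Conversely, if `x + ℕq₁ + ⋯ + ℕq_m ⊆ Y` with `q₁, …, q_m` independent, then `Y` has
dimension at least `m`: the grid `x + Σ tᵢ qᵢ`, `t ∈ {0, …, k}^m`, has `(k + 1)^m` points, while an
affine subspace of dimension `< m` misses some direction `qᵢ`, so it cannot contain two grid points
differing only in the `i`-th coordinate and meets at most `(k + 1)^(m - 1)` of them; `k` such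
subspaces cannot cover the grid. This applies to `L` with the generators of `M = ⟨P⟩`, and to `X`
with `R = {a} ∪ (a + P)`, `a = Σ P`, whose elements are interior to `M` and whose ℚ-span is that
of `P`.
-/

open Module Submodule Finset

section Grid

variable {K E ι : Type*} [Field K] [AddCommGroup E] [Module K E] [Fintype ι]

theorem exists_notMem_of_finrank_lt [FiniteDimensional K E] {v : ι → E}
    (hv : LinearIndependent K v) {V : Submodule K E} (hV : finrank K V < Fintype.card ι) :
    ∃ i, v i ∉ V := by
  by_contra! hall
  have hvV : LinearIndependent K (fun i => (⟨v i, hall i⟩ : V)) :=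
    LinearIndependent.of_comp V.subtype hv
  exact hV.not_ge hvV.fintype_card_le_finrank

theorem eq_of_add_sum_smul_mem_vadd {V : Submodule K E} {v : ι → E} {i₀ : ι} (hv : v i₀ ∉ V)
    {x a : E} {t t' : ι → K} (hagree : ∀ i ≠ i₀, t i = t' i)
    (ht : x + ∑ i, t i • v i ∈ a +ᵥ (V : Set E))
    (ht' : x + ∑ i, t' i • v i ∈ a +ᵥ (V : Set E)) : t = t' := by
  obtain ⟨w, hw, hwt⟩ := ht
  obtain ⟨w', hw', hwt'⟩ := ht'
  have hdiff : (t i₀ - t' i₀) • v i₀ = w - w' := by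
    have hsum : ∑ i, (t i - t' i) • v i = (t i₀ - t' i₀) • v i₀ :=
      Fintype.sum_eq_single i₀ fun i hi => by rw [hagree i hi, sub_self, zero_smul]
    rw [← hsum]
    simp only [vadd_eq_add] at hwt hwt'
    simp only [sub_smul, Finset.sum_sub_distrib]
    linear_combination (norm := abel) hwt' - hwt
  have hi₀ : t i₀ = t' i₀ := by
    by_contra hne
    exact hv ((smul_mem_iff V (sub_ne_zero.mpr hne)).mp (hdiff ▸ sub_mem hw hw'))
  funext i
  by_cases hi : i = i₀
  · exact hi ▸ hi₀
  · exact hagree i hi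

theorem card_le_of_forall_add_sum_smul_mem_vadd [CharZero K] {V : Submodule K E} {v : ι → E}
    {i₀ : ι} (hv : v i₀ ∉ V) {x a : E} {N : ℕ} (s : Finset (ι → Fin N))
    (hs : ∀ t ∈ s, x + ∑ i, ((t i : ℕ) : K) • v i ∈ a +ᵥ (V : Set E)) :
    #s ≤ N ^ (Fintype.card ι - 1) := by
  classical
  calc #s ≤ #(univ : Finset ({i // i ≠ i₀} → Fin N)) := by
        refine card_le_card_of_injOn (fun t j => t j) (by simp) fun t ht t' ht' heq => ?_
        have hcast := eq_of_add_sum_smul_mem_vadd hv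
          (fun i hi => by simp only [congrFun heq ⟨i, hi⟩]) (hs t ht) (hs t' ht')
        funext i
        exact Fin.val_injective (Nat.cast_injective (congrFun hcast i))
    _ = N ^ (Fintype.card ι - 1) := by
        simp [Fintype.card_subtype_compl]

end Grid

section DimQ

variable {n : ℕ}

theorem rankOf_eq_finrank (V : Submodule ℚ (Fin n → ℚ)) :
    rankOf (V : Set (Fin n → ℚ)) = finrank ℚ V := by
  have hbasis : GeneratesQ (univ.image fun i => (finBasis ℚ V i : Fin n → ℚ)) V := by
    rw [GeneratesQ, coe_image, coe_univ, Set.image_univ]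
    change ((span ℚ (Set.range (V.subtype ∘ finBasis ℚ V))) : Set (Fin n → ℚ)) = V
    rw [Set.range_comp, span_image, Basis.span_eq, map_subtype_top]
  have hmem : _ ∈ {d | ∃ B : Finset (Fin n → ℚ), #B = d ∧ GeneratesQ B V} := ⟨_, rfl, hbasis⟩
  have hle : rankOf (V : Set (Fin n → ℚ)) ≤ finrank ℚ V :=
    (Nat.sInf_le hmem).trans (card_image_le.trans (by simp))
  obtain ⟨B, hcard, hB⟩ := Nat.sInf_mem ⟨_, hmem⟩
  refine hle.antisymm ?_
  calc finrank ℚ V = finrank ℚ (span ℚ (B : Set (Fin n → ℚ))) := by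
        rw [SetLike.coe_injective hB]
    _ ≤ #B := finrank_span_finset_le_card B
    _ = rankOf (V : Set (Fin n → ℚ)) := hcard

theorem dimQ_le_finrank {Y : Set (Fin n → ℚ)} (hY : Y.Nonempty) (V : Submodule ℚ (Fin n → ℚ))
    (a : Fin n → ℚ) (h : Y ⊆ a +ᵥ (V : Set (Fin n → ℚ))) : dimQ Y ≤ finrank ℚ V := by
  rw [dimQ, if_neg hY.ne_empty, ← rankOf_eq_finrank]
  exact WithBot.coe_le_coe.mpr
    (Nat.sInf_le ⟨1, fun _ => V, fun _ => a, fun _ => le_rfl, by rwa [Set.iUnion_const]⟩)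

theorem card_le_dimQ_of_forall_add_sum_mem {ι : Type*} [Fintype ι] {v : ι → Fin n → ℚ}
    (hv : LinearIndependent ℚ v) {x : Fin n → ℚ} {Y : Set (Fin n → ℚ)}
    (h : ∀ c : ι → ℕ, x + ∑ i, c i • v i ∈ Y) : (Fintype.card ι : WithBot ℕ) ≤ dimQ Y := by
  classical
  rw [dimQ, if_neg (Set.nonempty_of_mem (h 0)).ne_empty, Nat.cast_withBot]
  refine WithBot.coe_le_coe.mpr (le_csInf
    ⟨rankOf ((⊤ : Submodule ℚ (Fin n → ℚ)) : Set (Fin n → ℚ)), 1, fun _ => ⊤, fun _ => 0,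
      fun _ => le_rfl, fun y _ => by simp⟩ ?_)
  rintro d ⟨k, V, a, hV, hcover⟩
  by_contra! hd
  have hmiss : ∀ j, ∃ i, v i ∉ V j := fun j =>
    exists_notMem_of_finrank_lt hv (by rw [← rankOf_eq_finrank]; exact (hV j).trans_lt hd)
  choose i₀ hi₀ using hmiss
  have hgrid : ∀ t : ι → Fin (k + 1), ∃ j, x + ∑ i, ((t i : ℕ) : ℚ) • v i ∈ a j +ᵥ (V j : Set _) :=
    fun t => Set.mem_iUnion.mp (by simpa [Nat.cast_smul_eq_nsmul] using hcover (h fun i => t i))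
  choose f hf using hgrid
  obtain ⟨m, hm⟩ : ∃ m, Fintype.card ι = m + 1 := Nat.exists_eq_add_one.mpr (by omega)
  have hlt : #(univ : Finset (Fin k)) * (k + 1) ^ m < #(univ : Finset (ι → Fin (k + 1))) := by
    simp only [card_univ, Fintype.card_fun, Fintype.card_fin, hm, pow_succ]
    nlinarith [pow_pos (Nat.succ_pos k) m]
  obtain ⟨j, -, hj⟩ := exists_lt_card_fiber_of_mul_lt_card_of_maps_to
    (fun t _ => mem_univ (f t)) hlt
  have hfiber := card_le_of_forall_add_sum_smul_mem_vadd (hi₀ j) {t | f t = j}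
    fun t ht => (mem_filter.mp ht).2 ▸ hf t
  rw [hm, Nat.add_sub_cancel] at hfiber
  exact hj.not_ge hfiber

theorem finrank_span_le_dimQ {S : Set (Fin n → ℚ)} {x : Fin n → ℚ} {Y : Set (Fin n → ℚ)}
    (h : x +ᵥ (AddSubmonoid.closure S : Set (Fin n → ℚ)) ⊆ Y) :
    (finrank ℚ (span ℚ S) : WithBot ℕ) ≤ dimQ Y := by
  obtain ⟨T, hTS, hspan, hT⟩ := exists_linearIndependent ℚ S
  have : Fintype T := hT.setFinite.fintype
  rw [← hspan, ← Subtype.range_coe (s := T), finrank_span_eq_card hT]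
  exact card_le_dimQ_of_forall_add_sum_mem hT fun c =>
    h ⟨_, sum_mem fun i _ => nsmul_mem (AddSubmonoid.subset_closure (hTS i.2)) _, rfl⟩

end DimQ

section DimZ

variable {n : ℕ}

def castZQ (n : ℕ) : (Fin n → ℤ) →+ (Fin n → ℚ) := (Int.castAddHom ℚ).compLeft (Fin n)

theorem image_castZQ_vadd_closure (b : Fin n → ℤ) (P : Set (Fin n → ℤ)) :
    castZQ n '' (b +ᵥ (AddSubmonoid.closure P : Set (Fin n → ℤ))) =
      castZQ n b +ᵥ (AddSubmonoid.closure (castZQ n '' P) : Set (Fin n → ℚ)) := by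
  rw [Set.image_vadd_distrib, ← AddMonoidHom.map_mclosure, AddSubmonoid.coe_map]

theorem dimZ_le_finrank {X : Set (Fin n → ℤ)} (hX : X.Nonempty) {b : Fin n → ℤ}
    {P : Set (Fin n → ℤ)} (h : X ⊆ b +ᵥ (AddSubmonoid.closure P : Set (Fin n → ℤ))) :
    dimZ X ≤ finrank ℚ (span ℚ (castZQ n '' P)) := by
  refine dimQ_le_finrank (hX.image (castZQ n)) _ (castZQ n b) ?_
  calc castZQ n '' X ⊆ castZQ n '' (b +ᵥ (AddSubmonoid.closure P : Set (Fin n → ℤ))) :=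
        Set.image_mono h
    _ = castZQ n b +ᵥ (AddSubmonoid.closure (castZQ n '' P) : Set (Fin n → ℚ)) :=
        image_castZQ_vadd_closure b P
    _ ⊆ castZQ n b +ᵥ (span ℚ (castZQ n '' P) : Set (Fin n → ℚ)) :=
        Set.vadd_set_mono closure_subset_span

theorem finrank_le_dimZ {X : Set (Fin n → ℤ)} {x : Fin n → ℤ} {R : Set (Fin n → ℤ)}
    (h : x +ᵥ (AddSubmonoid.closure R : Set (Fin n → ℤ)) ⊆ X) :
    (finrank ℚ (span ℚ (castZQ n '' R)) : WithBot ℕ) ≤ dimZ X :=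
  finrank_span_le_dimQ ((image_castZQ_vadd_closure x R).symm.subset.trans (Set.image_mono h))

end DimZ

section Interior

def interiorGens {A : Type*} [AddCommMonoid A] [DecidableEq A] (P : Finset A) : Finset A :=
  insert (∑ p ∈ P, p) (P.image (∑ p ∈ P, p + ·))

theorem span_image_interiorGens {K A E : Type*} [Ring K] [AddCommGroup A] [DecidableEq A]
    [AddCommGroup E] [Module K E] (f : A →+ E) (P : Finset A) :
    span K (f '' interiorGens P) = span K (f '' P) := by
  set a := ∑ p ∈ P, p
  have ha : f a ∈ span K (f '' P) := by
    rw [map_sum]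
    exact sum_mem fun p hp => subset_span ⟨p, hp, rfl⟩
  have ha' : f a ∈ span K (f '' interiorGens P) :=
    subset_span ⟨a, by simp [interiorGens, a], rfl⟩
  refine le_antisymm (span_le.mpr ?_) (span_le.mpr ?_)
  · rintro _ ⟨r, hr, rfl⟩
    simp only [interiorGens, coe_insert, coe_image, Set.mem_insert_iff, Set.mem_image] at hr
    obtain rfl | ⟨p, hp, rfl⟩ := hr
    · exact ha
    · rw [map_add]
      exact add_mem ha (subset_span ⟨p, hp, rfl⟩)
  · rintro _ ⟨p, hp, rfl⟩
    have hap : f (a + p) ∈ span K (f '' interiorGens P) :=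
      subset_span ⟨a + p, by simp [interiorGens, a, hp], rfl⟩
    simpa using sub_mem hap ha'

variable {n : ℕ}

theorem isInteriorZ_sum (P : Finset (Fin n → ℤ)) :
    IsInteriorZ (AddSubmonoid.closure (P : Set (Fin n → ℤ))) (∑ p ∈ P, p) := by
  refine ⟨sum_mem fun p hp => AddSubmonoid.subset_closure hp, fun x hx => ?_⟩
  induction hx using AddSubmonoid.closure_induction with
  | mem p hp =>
    refine ⟨1, le_rfl, ∑ q ∈ P.erase p, q,
      sum_mem fun q hq => AddSubmonoid.subset_closure (P.erase_subset p hq), ?_⟩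
    rw [one_smul, ← add_sum_erase P _ hp]
  | zero =>
    exact ⟨1, le_rfl, _, sum_mem fun p hp => AddSubmonoid.subset_closure hp, by simp⟩
  | add y z _ _ ihy ihz =>
    obtain ⟨N₁, hN₁, m₁, hm₁, he₁⟩ := ihy
    obtain ⟨N₂, -, m₂, hm₂, he₂⟩ := ihz
    refine ⟨N₁ + N₂, by omega, m₁ + m₂, add_mem hm₁ hm₂, ?_⟩
    rw [add_nsmul, he₁, he₂]
    abel

theorem IsInteriorZ.add_of_mem {M : AddSubmonoid (Fin n → ℤ)} {a p : Fin n → ℤ}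
    (ha : IsInteriorZ M a) (hp : p ∈ M) : IsInteriorZ M (a + p) := by
  refine ⟨add_mem ha.1 hp, fun x hx => ?_⟩
  obtain ⟨N, hN, m, hm, he⟩ := ha.2 x hx
  refine ⟨N, hN, m + N • p, add_mem hm (nsmul_mem hp N), ?_⟩
  rw [smul_add, he]
  abel

theorem isInteriorZ_of_mem_interiorGens {P : Finset (Fin n → ℤ)} {r : Fin n → ℤ}
    (hr : r ∈ interiorGens P) : IsInteriorZ (AddSubmonoid.closure (P : Set (Fin n → ℤ))) r := by
  simp only [interiorGens, mem_insert, mem_image] at hr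
  obtain rfl | ⟨p, hp, rfl⟩ := hr
  · exact isInteriorZ_sum P
  · exact (isInteriorZ_sum P).add_of_mem (AddSubmonoid.subset_closure hp)

end Interior

theorem stmt13 {n : ℕ} (X L : Set (Fin n → ℤ)) (h : IsLinearization L X) :
    dimZ X = dimZ L := by
  obtain ⟨b, M, ⟨P, rfl⟩, rfl, hXL, hX⟩ := h
  obtain ⟨x, hxX, hxR⟩ := hX (interiorGens P) fun _ => isInteriorZ_of_mem_interiorGens
  have hbL : b ∈ b +ᵥ (AddSubmonoid.closure (P : Set (Fin n → ℤ)) : Set (Fin n → ℤ)) :=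
    ⟨0, zero_mem _, add_zero b⟩
  apply le_antisymm
  · calc dimZ X ≤ finrank ℚ (span ℚ (castZQ n '' P)) := dimZ_le_finrank ⟨x, hxX⟩ hXL
      _ ≤ dimZ _ := finrank_le_dimZ subset_rfl
  · calc dimZ _ ≤ finrank ℚ (span ℚ (castZQ n '' P)) := dimZ_le_finrank ⟨b, hbL⟩ subset_rfl
      _ = finrank ℚ (span ℚ (castZQ n '' interiorGens P)) := by rw [span_image_interiorGens]
      _ ≤ dimZ X := finrank_le_dimZ hxR
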